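/- Every variety F-Oalg⁰_≤ of ordered F-algebras defined by inequalities c ≤ d between constant symbols has the special amalgamation property; consequently, epimorphisms are surjective in F-Oalg⁰_≤. -/
import Mathlib


structure Signature where
  F : Type
  ar : F → ℕ

structure OAlg (S : Signature) where
  carrier : Type
  ops : ∀ f : S.F, (Fin (S.ar f) → carrier) → carrier
  le : carrier → carrier → Prop
  le_refl : ∀ a, le a a
  le_trans : ∀ a b c, le a b → le b c → le a c
  le_antisymm : ∀ a b, le a b → le b a → a = b
  mono : ∀ (f : S.F) (a b : Fin (S.ar f) → carrier),
    (∀ i, le (a i) (b i)) → le (ops f a) (ops f b)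

structure OHom {S : Signature} (A B : OAlg S) where
  toFun : A.carrier → B.carrier
  map_ops : ∀ (f : S.F) (a : Fin (S.ar f) → A.carrier),
    toFun (A.ops f a) = B.ops f (fun i => toFun (a i))
  mono : ∀ x y, A.le x y → B.le (toFun x) (toFun y)

/-- The value in `D` of a constant (nullary operation) symbol `c`. -/
def nullOp {S : Signature} (D : OAlg S) (c : S.F) (h : S.ar c = 0) : D.carrier :=
  D.ops c (fun i => absurd i.isLt (by omega))

/-- An ordered algebra lies in the variety `F-Oalg⁰_≤` determined by a family `r`
of inequalities `c ≤ d` between constant symbols. -/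
def SatIneq {S : Signature} (r : S.F → S.F → Prop) (D : OAlg S) : Prop :=
  ∀ (c d : S.F) (hc : S.ar c = 0) (hd : S.ar d = 0),
    r c d → D.le (nullOp D c hc) (nullOp D d hd)

/-- A homomorphism of ordered algebras is an order-embedding if it reflects the
order. -/
def IsOrderEmbedding {S : Signature} {A B : OAlg S} (f : OHom A B) : Prop :=
  ∀ x y : A.carrier, B.le (f.toFun x) (f.toFun y) → A.le x y

/-- `(P, μ₁, μ₂)` is a pushout of the span `(φ₁, φ₂)` in the variety
`F-Oalg⁰_≤` determined by `r`. -/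
def IsPushout {S : Signature} (r : S.F → S.F → Prop) {C A B : OAlg S}
    (φ₁ : OHom C A) (φ₂ : OHom C B)
    (P : OAlg S) (μ₁ : OHom A P) (μ₂ : OHom B P) : Prop :=
  SatIneq r P ∧
  (∀ c : C.carrier, μ₁.toFun (φ₁.toFun c) = μ₂.toFun (φ₂.toFun c)) ∧
  ∀ D : OAlg S, SatIneq r D → ∀ (γA : OHom A D) (γB : OHom B D),
    (∀ c : C.carrier, γA.toFun (φ₁.toFun c) = γB.toFun (φ₂.toFun c)) →
    ∃! δ : OHom P D,
      (∀ a : A.carrier, δ.toFun (μ₁.toFun a) = γA.toFun a) ∧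
      (∀ b : B.carrier, δ.toFun (μ₂.toFun b) = γB.toFun b)

/-- A homomorphism of ordered algebras is an isomorphism iff it is a surjective
order-embedding. -/
def IsOrderIso {S : Signature} {A B : OAlg S} (f : OHom A B) : Prop :=
  Function.Surjective f.toFun ∧ IsOrderEmbedding f

/-- `f` is an epimorphism in the variety `F-Oalg⁰_≤` determined by `r`. -/
def IsEpi0 {S : Signature} (r : S.F → S.F → Prop) {A B : OAlg S} (f : OHom A B) : Prop :=
  ∀ D : OAlg S, SatIneq r D → ∀ g h : OHom B D,
    (∀ a : A.carrier, g.toFun (f.toFun a) = h.toFun (f.toFun a)) →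
    ∀ b : B.carrier, g.toFun b = h.toFun b

/-- Terms over two tagged copies of a carrier. -/
inductive Tm (S : Signature) (β : Type) : Type
  | gen : Bool → β → Tm S β
  | op : (f : S.F) → (Fin (S.ar f) → Tm S β) → Tm S β

variable {S : Signature}

/-- The preorder generated on terms over two copies of `B`, glued along `B₀`,
with constant inequalities from `r`. -/
inductive Pre (r : S.F → S.F → Prop) (B : OAlg S) (B₀ : B.carrier → Prop) :
    Tm S B.carrier → Tm S B.carrier → Prop
  | refl (t) : Pre r B B₀ t t
  | trans {t u v} : Pre r B B₀ t u → Pre r B B₀ u v → Pre r B B₀ t v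
  | emb (k : Bool) {b b'} : B.le b b' → Pre r B B₀ (.gen k b) (.gen k b')
  | glue {b} (k k' : Bool) : B₀ b → Pre r B B₀ (.gen k b) (.gen k' b)
  | evle (k f a) : Pre r B B₀ (.op f (fun i => .gen k (a i))) (.gen k (B.ops f a))
  | evge (k f a) : Pre r B B₀ (.gen k (B.ops f a)) (.op f (fun i => .gen k (a i)))
  | mono (f) {t u} : (∀ i, Pre r B B₀ (t i) (u i)) → Pre r B B₀ (.op f t) (.op f u)
  | const {c d} (hc : S.ar c = 0) (hd : S.ar d = 0) (t u) :
      r c d → Pre r B B₀ (.op c t) (.op d u)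

/-- `Dn B B₀ t c j` : the copy-`j` element `c` lies below `t` in the amalgam. -/
def Dn (B : OAlg S) (B₀ : B.carrier → Prop) : Tm S B.carrier → B.carrier → Bool → Prop
  | .gen k b, c, j => (j = k ∧ B.le c b) ∨ (∃ m, B₀ m ∧ B.le c m ∧ B.le m b)
  | .op f t, c, j =>
      (∃ cv : Fin (S.ar f) → B.carrier,
        (∀ i, Dn B B₀ (t i) (cv i) j) ∧ B.le c (B.ops f cv)) ∨
      (∃ m, B₀ m ∧ B.le c m ∧ ∃ cv : Fin (S.ar f) → B.carrier,
        (∀ i, Dn B B₀ (t i) (cv i) (!j)) ∧ B.le m (B.ops f cv))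

theorem dn_gen_le {B : OAlg S} {B₀ : B.carrier → Prop} {k : Bool} {b c : B.carrier}
    {j : Bool} (h : Dn B B₀ (.gen k b) c j) : B.le c b := by
  rcases h with ⟨_, h⟩ | ⟨m, _, h1, h2⟩
  · exact h
  · exact B.le_trans _ _ _ h1 h2

theorem dn_gen_cross {B : OAlg S} {B₀ : B.carrier → Prop} {k : Bool} {b c : B.carrier}
    {j : Bool} (hj : j ≠ k) (h : Dn B B₀ (.gen k b) c j) :
    ∃ m, B₀ m ∧ B.le c m ∧ B.le m b := by
  rcases h with ⟨h, _⟩ | h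
  · exact absurd h hj
  · exact h

theorem pre_dn {r : S.F → S.F → Prop} {B : OAlg S} {B₀ : B.carrier → Prop}
    (hB : ∀ (c d : S.F), S.ar c = 0 → S.ar d = 0 → r c d →
      ∀ (t : Fin (S.ar c) → B.carrier) (u : Fin (S.ar d) → B.carrier),
        B.le (B.ops c t) (B.ops d u))
    (hcl : ∀ (f : S.F) (a : Fin (S.ar f) → B.carrier), (∀ i, B₀ (a i)) → B₀ (B.ops f a))
    {t u : Tm S B.carrier} (h : Pre r B B₀ t u) :
    ∀ c j, Dn B B₀ t c j → Dn B B₀ u c j := by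
  induction h with
  | refl t => exact fun c j h => h
  | trans h1 h2 ih1 ih2 => exact fun c j h => ih2 c j (ih1 c j h)
  | emb k hbb' =>
      intro c j h
      rcases h with ⟨hj, h⟩ | ⟨m, hm, h1, h2⟩
      · exact Or.inl ⟨hj, B.le_trans _ _ _ h hbb'⟩
      · exact Or.inr ⟨m, hm, h1, B.le_trans _ _ _ h2 hbb'⟩
  | glue k k' hb =>
      intro c j h
      exact Or.inr ⟨_, hb, dn_gen_le h, B.le_refl _⟩
  | evle k f a =>
      intro c j h
      rcases h with ⟨cv, hcv, hle⟩ | ⟨m, hm, hcm, cv, hcv, hle⟩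
      · by_cases hj : j = k
        · exact Or.inl ⟨hj, B.le_trans _ _ _ hle
            (B.mono f cv a (fun i => dn_gen_le (hcv i)))⟩
        · -- j ≠ k : each coordinate crosses through B₀
          choose mv hmv h1 h2 using fun i => dn_gen_cross hj (hcv i)
          exact Or.inr ⟨B.ops f mv, hcl f mv hmv,
            B.le_trans _ _ _ hle (B.mono f cv mv h1), B.mono f mv a h2⟩
      · by_cases hj : (!j) = k
        · -- the witness m sits below ops a
          exact Or.inr ⟨m, hm, hcm, B.le_trans _ _ _ hle
            (B.mono f cv a (fun i => dn_gen_le (hcv i)))⟩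
        · choose mv hmv h1 h2 using fun i => dn_gen_cross hj (hcv i)
          have : B.le m (B.ops f a) :=
            B.le_trans _ _ _ hle (B.le_trans _ _ _ (B.mono f cv mv h1) (B.mono f mv a h2))
          have hj' : j = k := by
            cases j <;> cases k <;> simp_all
          exact Or.inl ⟨hj', B.le_trans _ _ _ hcm this⟩
  | evge k f a =>
      intro c j h
      rcases h with ⟨hj, hle⟩ | ⟨m, hm, hcm, hle⟩
      · exact Or.inl ⟨a, fun i => Or.inl ⟨hj, B.le_refl _⟩, hle⟩
      · by_cases hj : j = k
        · exact Or.inl ⟨a, fun i => Or.inl ⟨hj, B.le_refl _⟩,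
            B.le_trans _ _ _ hcm hle⟩
        · have hj' : (!j) = k := by cases j <;> cases k <;> simp_all
          exact Or.inr ⟨m, hm, hcm, a, fun i => Or.inl ⟨hj', B.le_refl _⟩, hle⟩
  | mono f ht ih =>
      intro c j h
      rcases h with ⟨cv, hcv, hle⟩ | ⟨m, hm, hcm, cv, hcv, hle⟩
      · exact Or.inl ⟨cv, fun i => ih i (cv i) j (hcv i), hle⟩
      · exact Or.inr ⟨m, hm, hcm, cv, fun i => ih i (cv i) (!j) (hcv i), hle⟩
  | const hc hd t u hr =>
      rename_i cs ds
      intro e j h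
      have uv : Fin (S.ar ds) → B.carrier := fun i => absurd i.isLt (by omega)
      have key : ∀ cv, B.le (B.ops _ cv) (B.ops _ uv) := fun cv => hB _ _ hc hd hr cv uv
      rcases h with ⟨cv, _, hle⟩ | ⟨m, hm, hcm, cv, _, hle⟩
      · exact Or.inl ⟨uv, fun i => absurd i.isLt (by omega), B.le_trans _ _ _ hle (key cv)⟩
      · exact Or.inl ⟨uv, fun i => absurd i.isLt (by omega),
          B.le_trans _ _ _ hcm (B.le_trans _ _ _ hle (key cv))⟩

section Amalgam

variable (r : S.F → S.F → Prop) (B : OAlg S) (B₀ : B.carrier → Prop)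

def preSetoid : Setoid (Tm S B.carrier) where
  r t u := Pre r B B₀ t u ∧ Pre r B B₀ u t
  iseqv := ⟨fun t => ⟨Pre.refl t, Pre.refl t⟩, fun ⟨h1, h2⟩ => ⟨h2, h1⟩,
    fun ⟨h1, h2⟩ ⟨h3, h4⟩ => ⟨Pre.trans h1 h3, Pre.trans h4 h2⟩⟩

abbrev AmCar := Quotient (preSetoid r B B₀)

def amLe : AmCar r B B₀ → AmCar r B B₀ → Prop :=
  Quotient.lift₂ (fun t u => Pre r B B₀ t u) (by
    rintro t u t' u' ⟨h1, h2⟩ ⟨h3, h4⟩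
    exact propext ⟨fun h => Pre.trans h2 (Pre.trans h h3),
      fun h => Pre.trans h1 (Pre.trans h h4)⟩)

noncomputable def Am : OAlg S where
  carrier := AmCar r B B₀
  ops f q := Quotient.mk _ (.op f (fun i => (q i).out))
  le := amLe r B B₀
  le_refl a := by
    induction a using Quotient.ind
    exact Pre.refl _
  le_trans a b c := by
    induction a using Quotient.ind
    induction b using Quotient.ind
    induction c using Quotient.ind
    exact fun h1 h2 => Pre.trans h1 h2
  le_antisymm a b := by
    induction a using Quotient.ind
    induction b using Quotient.ind
    exact fun h1 h2 => Quotient.sound ⟨h1, h2⟩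
  mono f a b h := by
    refine Pre.mono f (fun i => ?_)
    have hi := h i
    rw [← Quotient.out_eq (a i), ← Quotient.out_eq (b i)] at hi
    exact hi

theorem am_satIneq : SatIneq r (Am r B B₀) := by
  intro c d hc hd h
  exact Pre.const hc hd _ _ h

noncomputable def amHom (k : Bool) : OHom B (Am r B B₀) where
  toFun b := Quotient.mk _ (.gen k b)
  map_ops f a := by
    refine Quotient.sound ⟨?_, ?_⟩
    · refine Pre.trans (Pre.evge k f a) (Pre.mono f (fun i => ?_))
      have : Quotient.mk (preSetoid r B B₀)
          (Quotient.out (Quotient.mk (preSetoid r B B₀) (Tm.gen k (a i)))) =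
          Quotient.mk (preSetoid r B B₀) (Tm.gen k (a i)) := Quotient.out_eq _
      exact (Quotient.exact this).2
    · refine Pre.trans (Pre.mono f (fun i => ?_)) (Pre.evle k f a)
      have : Quotient.mk (preSetoid r B B₀)
          (Quotient.out (Quotient.mk (preSetoid r B B₀) (Tm.gen k (a i)))) =
          Quotient.mk (preSetoid r B B₀) (Tm.gen k (a i)) := Quotient.out_eq _
      exact (Quotient.exact this).1
  mono x y h := Pre.emb k h

theorem amHom_agree {b : B.carrier} (hb : B₀ b) :
    (amHom r B B₀ true).toFun b = (amHom r B B₀ false).toFun b :=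
  Quotient.sound ⟨Pre.glue _ _ hb, Pre.glue _ _ hb⟩

theorem amHom_sep (hB : SatIneq r B)
    (hcl : ∀ (f : S.F) (a : Fin (S.ar f) → B.carrier), (∀ i, B₀ (a i)) → B₀ (B.ops f a))
    {x : B.carrier} (hx : ¬ B₀ x) :
    (amHom r B B₀ true).toFun x ≠ (amHom r B B₀ false).toFun x := by
  intro h
  have hpre : Pre r B B₀ (.gen true x) (.gen false x) := (Quotient.exact h).1
  have hB' : ∀ (c d : S.F), S.ar c = 0 → S.ar d = 0 → r c d →
      ∀ (t : Fin (S.ar c) → B.carrier) (u : Fin (S.ar d) → B.carrier),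
        B.le (B.ops c t) (B.ops d u) := by
    intro c d hc hd hrcd t u
    have ht : t = fun i => absurd i.isLt (by omega) := by
      funext i; exact absurd i.isLt (by omega)
    have hu : u = fun i => absurd i.isLt (by omega) := by
      funext i; exact absurd i.isLt (by omega)
    rw [ht, hu]
    exact hB c d hc hd hrcd
  have hdn : Dn B B₀ (.gen true x) x true := Or.inl ⟨rfl, B.le_refl x⟩
  have hdn' := pre_dn hB' hcl hpre x true hdn
  rcases hdn' with ⟨h1, _⟩ | ⟨m, hm, h1, h2⟩
  · exact Bool.noConfusion h1
  · have : m = x := B.le_antisymm m x h2 h1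
    exact hx (this ▸ hm)

/-- Core separation lemma: for a subalgebra `B₀` of `B` and `x ∉ B₀`, there is an
algebra `D` in the variety and homs `g h : B → D` agreeing on `B₀` but not at `x`. -/
theorem core_sep (hB : SatIneq r B)
    (hcl : ∀ (f : S.F) (a : Fin (S.ar f) → B.carrier), (∀ i, B₀ (a i)) → B₀ (B.ops f a))
    {x : B.carrier} (hx : ¬ B₀ x) :
    ∃ (D : OAlg S) (g h : OHom B D), SatIneq r D ∧
      (∀ b, B₀ b → g.toFun b = h.toFun b) ∧ g.toFun x ≠ h.toFun x :=
  ⟨Am r B B₀, amHom r B B₀ true, amHom r B B₀ false,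
    am_satIneq r B B₀,
    fun _ hb => amHom_agree r B B₀ hb, amHom_sep r B B₀ hB hcl hx⟩

end Amalgam

/-- Identity homomorphism. -/
def OHom.id' (A : OAlg S) : OHom A A :=
  ⟨fun a => a, fun _ _ => rfl, fun _ _ h => h⟩

/-- Composition of homomorphisms. -/
def OHom.comp {A B C : OAlg S} (g : OHom B C) (f : OHom A B) : OHom A C :=
  ⟨fun a => g.toFun (f.toFun a),
   fun op a => by show g.toFun (f.toFun _) = _; rw [f.map_ops, g.map_ops],
   fun x y h => g.mono _ _ (f.mono _ _ h)⟩

/-- The inverse of an order-isomorphism is a homomorphism. -/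
noncomputable def OHom.inv {A B : OAlg S} (ν : OHom A B) (h : IsOrderIso ν) :
    OHom B A where
  toFun := Function.surjInv h.1
  map_ops f a := by
    have hinj : Function.Injective ν.toFun := fun x y hxy =>
      A.le_antisymm x y (h.2 x y (hxy ▸ B.le_refl _)) (h.2 y x (hxy ▸ B.le_refl _))
    apply hinj
    rw [Function.surjInv_eq h.1, ν.map_ops]
    congr 1
    funext i
    rw [Function.surjInv_eq h.1]
  mono x y hxy := by
    apply h.2
    rw [Function.surjInv_eq h.1, Function.surjInv_eq h.1]
    exact hxy

theorem OHom.inv_eq {A B : OAlg S} (ν : OHom A B) (h : IsOrderIso ν) (b : B.carrier) :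
    ν.toFun ((ν.inv h).toFun b) = b := Function.surjInv_eq h.1 b

theorem OHom.inv_eq' {A B : OAlg S} (ν : OHom A B) (h : IsOrderIso ν) (a : A.carrier) :
    (ν.inv h).toFun (ν.toFun a) = a := by
  have hinj : Function.Injective ν.toFun := fun x y hxy =>
    A.le_antisymm x y (h.2 x y (hxy ▸ B.le_refl _)) (h.2 y x (hxy ▸ B.le_refl _))
  apply hinj
  rw [OHom.inv_eq]

theorem range_closed {A B : OAlg S} (f : OHom A B) :
    ∀ (op : S.F) (a : Fin (S.ar op) → B.carrier),
      (∀ i, ∃ c, f.toFun c = a i) → ∃ c, f.toFun c = B.ops op a := by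
  intro op a h
  choose c hc using h
  exact ⟨A.ops op c, by rw [f.map_ops]; congr 1; funext i; exact hc i⟩

/-- The variety `F-Oalg⁰_≤` of ordered algebras satisfying a fixed family of
inequalities `c ≤ d` between constant symbols has the special amalgamation
property, and consequently epimorphisms are surjective in it. -/
theorem oalg0_special_amalgamation_and_epis_surjective {S : Signature}
    (r : S.F → S.F → Prop) :
    -- special amalgamation property
    (∀ C A₁ A₂ : OAlg S, SatIneq r C → SatIneq r A₁ → SatIneq r A₂ →
      ∀ (φ₁ : OHom C A₁) (φ₂ : OHom C A₂),
        IsOrderEmbedding φ₁ → IsOrderEmbedding φ₂ →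
        ∀ ν : OHom A₁ A₂, IsOrderIso ν →
          (∀ c : C.carrier, φ₂.toFun c = ν.toFun (φ₁.toFun c)) →
          ∀ (P : OAlg S) (μ₁ : OHom A₁ P) (μ₂ : OHom A₂ P),
            IsPushout r φ₁ φ₂ P μ₁ μ₂ →
            IsOrderEmbedding μ₁ ∧ IsOrderEmbedding μ₂ ∧
            ∀ (x : A₁.carrier) (y : A₂.carrier), μ₁.toFun x = μ₂.toFun y →
              ∃ c : C.carrier, x = φ₁.toFun c ∧ y = φ₂.toFun c) ∧
    -- epimorphisms are surjective
    (∀ A B : OAlg S, SatIneq r A → SatIneq r B →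
      ∀ f : OHom A B, IsEpi0 r f → Function.Surjective f.toFun) := by
  constructor
  · intro C A₁ A₂ hC hA₁ hA₂ φ₁ φ₂ hφ₁ hφ₂ ν hν hcomm P μ₁ μ₂ hP
    obtain ⟨hPsat, hPcomm, hPuniv⟩ := hP
    -- δ : P → A₂ with δ∘μ₁ = ν, δ∘μ₂ = id
    obtain ⟨δ, ⟨hδ1, hδ2⟩, -⟩ := hPuniv A₂ hA₂ ν (OHom.id' A₂)
      (fun c => (hcomm c).symm)
    have hμ₂emb : IsOrderEmbedding μ₂ := by
      intro x y h
      have := δ.mono _ _ h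
      rw [hδ2, hδ2] at this
      exact this
    have hμ₁emb : IsOrderEmbedding μ₁ := by
      intro x y h
      have := δ.mono _ _ h
      rw [hδ1, hδ1] at this
      exact hν.2 x y this
    refine ⟨hμ₁emb, hμ₂emb, ?_⟩
    intro x y hxy
    have hyx : y = ν.toFun x := by
      have := congrArg δ.toFun hxy
      rw [hδ1, hδ2] at this
      exact (this.symm : _)
    -- show x is in the image of φ₁
    by_cases hx : ∃ c, φ₁.toFun c = x
    · obtain ⟨c, hc⟩ := hx
      exact ⟨c, hc.symm, by rw [hyx, hcomm c, hc]⟩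
    · exfalso
      obtain ⟨D, g, h, hD, hagree, hsep⟩ := core_sep r A₁ (fun b => ∃ c, φ₁.toFun c = b)
        hA₁ (range_closed φ₁) hx
      -- cone: γA := g, γB := h ∘ ν⁻¹
      have hνiso := hν
      obtain ⟨δ', ⟨hδ'1, hδ'2⟩, -⟩ := hPuniv D hD g (OHom.comp h (ν.inv hνiso))
        (by
          intro c
          show g.toFun (φ₁.toFun c) = h.toFun ((ν.inv hνiso).toFun (φ₂.toFun c))
          rw [hcomm c, OHom.inv_eq']
          exact hagree _ ⟨c, rfl⟩)
      apply hsep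
      have h1 := congrArg δ'.toFun hxy
      rw [hδ'1, hδ'2] at h1
      show g.toFun x = h.toFun x
      rw [h1, hyx]
      show (OHom.comp h (ν.inv hνiso)).toFun (ν.toFun x) = h.toFun x
      show h.toFun ((ν.inv hνiso).toFun (ν.toFun x)) = h.toFun x
      rw [OHom.inv_eq']
  · intro A B hA hB f hepi b
    by_contra hb
    push_neg at hb
    have hb' : ¬ ∃ a, f.toFun a = b := by
      rintro ⟨a, ha⟩; exact hb a ha
    obtain ⟨D, g, h, hD, hagree, hsep⟩ := core_sep r B (fun y => ∃ a, f.toFun a = y)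
      hB (range_closed f) hb'
    exact hsep (hepi D hD g h (fun a => hagree _ ⟨a, rfl⟩) b)
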